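/- There exist constants δ ∈ (0,1] and c₀ > 0 such that: for every smooth map η = (η₁,η₂) : ℝ² → ℝ², 2-periodic in each variable, satisfying the odevity conditions (η₁ even in y₂, η₂ odd in y₂), det(I + ∇η) = 1, and ‖∂₂η‖₂ ≤ δ, one has ‖∂₁η_j‖_{L^∞} ≤ c₀ ‖∂₂η‖₂ and ‖∂₂η_j‖_{L^∞} ≤ c₀ ‖∂₂²η‖₁ for j = 1,2, where the L^∞ norms are taken over the periodic cell (-1,1)². -/

import Mathlib

/-!
If `∫_{-1}^{1} f(y₁, t) dt = 0` for every `y₁`, then `|f|` is bounded by the `L¹` norm of `∂₂f`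
along the vertical segment, hence (Cauchy–Schwarz) by its `L²` norm there, and a one-dimensional
Sobolev embedding in `y₁` bounds that slice norm by `‖∂₂f‖₀² + ‖∂₁∂₂f‖₀²`. The mean-zero condition
holds for `f = ∂₂η_j` by periodicity in `y₂`, and for `f = ∂₁η₂` because `η₂` is odd in `y₂`.
The remaining entry is read off `det(I + ∇η) = 1` in the form
`∂₁η₁ (1 + ∂₂η₂) = ∂₂η₁ ∂₁η₂ - ∂₂η₂`, where smallness of `‖∂₂η‖₂` keeps `1 + ∂₂η₂ ≥ 1/2`.
-/

open MeasureTheory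

noncomputable section

/-- A point of the plane `ℝ²`. -/
abbrev Pt := ℝ × ℝ

/-- The periodic cell `(-1,1)²`. -/
def cell : Set Pt := Set.Ioo (-1 : ℝ) 1 ×ˢ Set.Ioo (-1 : ℝ) 1

/-- `f` is 2-periodic in each variable. -/
def Periodic2 (f : Pt → ℝ) : Prop :=
  (∀ y : Pt, f (y.1 + 2, y.2) = f y) ∧ ∀ y : Pt, f (y.1, y.2 + 2) = f y

/-- Partial derivative in the first variable. -/
def p1 (f : Pt → ℝ) : Pt → ℝ := fun y => fderiv ℝ f y (1, 0)

/-- Partial derivative in the second variable. -/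
def p2 (f : Pt → ℝ) : Pt → ℝ := fun y => fderiv ℝ f y (0, 1)

/-- Iterated partial derivative `∂₁^a ∂₂^b f`. -/
def pd (a b : ℕ) (f : Pt → ℝ) : Pt → ℝ := p1^[a] (p2^[b] f)

/-- Square of the `L²((-1,1)²)` norm. -/
def L2sq (f : Pt → ℝ) : ℝ := ∫ y in cell, (f y) ^ 2

/-- The `L²((-1,1)²)` norm `‖f‖₀`. -/
def L2 (f : Pt → ℝ) : ℝ := Real.sqrt (L2sq f)

/-- Square of the Sobolev norm `‖f‖_i² = Σ_{|α| ≤ i} ‖∂^α f‖₀²`. -/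
def sobSq (i : ℕ) (f : Pt → ℝ) : ℝ :=
  ∑ a ∈ Finset.range (i + 1), ∑ b ∈ Finset.range (i + 1 - a), L2sq (pd a b f)

/-- The Sobolev norm `‖f‖_i`. -/
def sob (i : ℕ) (f : Pt → ℝ) : ℝ := Real.sqrt (sobSq i f)

/-- Square of the homogeneous seminorm `‖∇^i f‖₀² = Σ_{|α| = i} ‖∂^α f‖₀²`. -/
def gradSq (i : ℕ) (f : Pt → ℝ) : ℝ :=
  ∑ a ∈ Finset.range (i + 1), L2sq (pd a (i - a) f)

/-- First component of a map `ℝ² → ℝ²`. -/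
def comp1 (v : Pt → Pt) : Pt → ℝ := fun y => (v y).1

/-- Second component of a map `ℝ² → ℝ²`. -/
def comp2 (v : Pt → Pt) : Pt → ℝ := fun y => (v y).2

/-- The odevity conditions: the first component is even in `y₂`, the second is odd. -/
def Odev (v : Pt → Pt) : Prop :=
  ∀ y : Pt, (v (y.1, -y.2)).1 = (v y).1 ∧ (v (y.1, -y.2)).2 = -(v y).2

/-- The incompressibility condition `det(I + ∇η) = 1`. -/
def DetCond (η : Pt → Pt) : Prop :=
  ∀ y : Pt, (1 + p1 (comp1 η) y) * (1 + p2 (comp2 η) y)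
      - p2 (comp1 η) y * p1 (comp2 η) y = 1

/-- Sobolev norm `‖v‖_i` of a vector field (components summed). -/
def sobV (i : ℕ) (v : Pt → Pt) : ℝ := Real.sqrt (sobSq i (comp1 v) + sobSq i (comp2 v))

/-- The vector field `∂₂v`. -/
def d2V (v : Pt → Pt) : Pt → Pt := fun y => (p2 (comp1 v) y, p2 (comp2 v) y)

theorem L2sq_nonneg (f : Pt → ℝ) : 0 ≤ L2sq f :=
  integral_nonneg fun _ => sq_nonneg _

section Partials

variable {f : Pt → ℝ}

theorem hasDerivAt_p1 (hf : Differentiable ℝ f) (x t : ℝ) :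
    HasDerivAt (fun s => f (s, t)) (p1 f (x, t)) x := by
  simpa [p1, Function.comp_def] using (hf (x, t)).hasFDerivAt.comp_hasDerivAt x
    ((hasDerivAt_id x).prodMk (hasDerivAt_const x t))

theorem hasDerivAt_p2 (hf : Differentiable ℝ f) (x t : ℝ) :
    HasDerivAt (fun u => f (x, u)) (p2 f (x, t)) t := by
  simpa [p2, Function.comp_def] using (hf (x, t)).hasFDerivAt.comp_hasDerivAt t
    ((hasDerivAt_const t x).prodMk (hasDerivAt_id t))

theorem contDiff_p1 {m n : WithTop ℕ∞} (hf : ContDiff ℝ n f) (hmn : m + 1 ≤ n) :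
    ContDiff ℝ m (p1 f) :=
  (hf.fderiv_right hmn).clm_apply contDiff_const

theorem contDiff_p2 {m n : WithTop ℕ∞} (hf : ContDiff ℝ n f) (hmn : m + 1 ≤ n) :
    ContDiff ℝ m (p2 f) :=
  (hf.fderiv_right hmn).clm_apply contDiff_const

theorem p1_p2_comm (hf : ContDiff ℝ 2 f) : p1 (p2 f) = p2 (p1 f) := by
  funext y
  have hdf : Differentiable ℝ (fderiv ℝ f) :=
    (hf.fderiv_right (m := 1) (by norm_num)).differentiable (by norm_num)
  have hsymm : IsSymmSndFDerivAt ℝ f y :=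
    hf.contDiffAt.isSymmSndFDerivAt (by simp [minSmoothness_of_isRCLikeNormedField])
  have hswap : ∀ v w : Pt,
      fderiv ℝ (fun z => fderiv ℝ f z v) y w = fderiv ℝ (fderiv ℝ f) y w v := fun v w => by
    simp [fderiv_clm_apply (hdf y) (differentiableAt_const v)]
  exact (hswap _ _).trans ((hsymm _ _).trans (hswap _ _).symm)

theorem p1_of_odd (hf : Differentiable ℝ f) (hodd : ∀ y : Pt, f (y.1, -y.2) = -f y) (y : Pt) :
    p1 f (y.1, -y.2) = -p1 f y := by
  obtain ⟨x, t⟩ := y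
  have hneg : HasDerivAt (fun s => f (s, -t)) (-p1 f (x, t)) x := by
    rw [show (fun s => f (s, -t)) = fun s => -f (s, t) from funext fun s => hodd (s, t)]
    exact (hasDerivAt_p1 hf x t).fun_neg
  exact (hasDerivAt_p1 hf x (-t)).unique hneg

theorem intervalIntegral_p2_eq_zero (hf : ContDiff ℝ 1 f)
    (hper : ∀ y : Pt, f (y.1, y.2 + 2) = f y) (x : ℝ) :
    ∫ t in (-1:ℝ)..1, p2 f (x, t) = 0 := by
  have hd := hf.differentiable one_ne_zero
  rw [intervalIntegral.integral_eq_sub_of_hasDerivAt (fun t _ => hasDerivAt_p2 hd x t)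
    (((contDiff_p2 (m := 0) hf (by norm_num)).continuous.comp
      (Continuous.prodMk_right x)).intervalIntegrable _ _)]
  have := hper (x, -1)
  norm_num at this
  rw [this, sub_self]

end Partials

section OneDimensional

variable {φ φ' : ℝ → ℝ} {a b x : ℝ}

theorem intervalIntegral_eq_zero_of_odd (hφ : ∀ t, φ (-t) = -φ t) :
    ∫ t in (-a)..a, φ t = 0 := by
  have h := intervalIntegral.integral_comp_neg (a := -a) (b := a) φ
  simp only [hφ, intervalIntegral.integral_neg, neg_neg] at h
  linarith

theorem abs_sub_le_integral_abs_deriv (hφ : ∀ u, HasDerivAt φ (φ' u) u) (hφ' : Continuous φ')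
    {s : ℝ} (hx : x ∈ Set.Icc a b) (hs : s ∈ Set.Icc a b) :
    |φ x - φ s| ≤ ∫ u in a..b, |φ' u| := by
  rw [← intervalIntegral.integral_eq_sub_of_hasDerivAt (fun u _ => hφ u)
    (hφ'.intervalIntegrable _ _)]
  calc |∫ u in s..x, φ' u| ≤ |∫ u in s..x, (|φ' u|)| := by
        simpa only [Real.norm_eq_abs] using
          intervalIntegral.norm_integral_le_abs_integral_norm (f := φ') (μ := volume)
    _ ≤ |∫ u in a..b, (|φ' u|)| := by
        refine intervalIntegral.abs_integral_mono_interval ?_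
          (Filter.Eventually.of_forall fun u => abs_nonneg _) (hφ'.abs.intervalIntegrable _ _)
        rw [Set.uIoc_of_le (hx.1.trans hx.2)]
        exact Set.Ioc_subset_Ioc (le_min hs.1 hx.1) (max_le hs.2 hx.2)
    _ = ∫ u in a..b, |φ' u| :=
        abs_of_nonneg (intervalIntegral.integral_nonneg (hx.1.trans hx.2) fun u _ => abs_nonneg _)

theorem abs_sub_average_le (hab : a < b) (hφ : ∀ u, HasDerivAt φ (φ' u) u)
    (hφ' : Continuous φ') (hx : x ∈ Set.Icc a b) :
    |φ x - (∫ s in a..b, φ s) / (b - a)| ≤ ∫ u in a..b, |φ' u| := by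
  have hba : 0 < b - a := sub_pos.mpr hab
  have hcont : Continuous φ := continuous_iff_continuousAt.mpr fun u => (hφ u).continuousAt
  have hmean : φ x - (∫ s in a..b, φ s) / (b - a) = (∫ s in a..b, (φ x - φ s)) / (b - a) := by
    rw [intervalIntegral.integral_sub intervalIntegrable_const (hcont.intervalIntegrable _ _),
      intervalIntegral.integral_const, smul_eq_mul]
    field_simp
  have hbound := intervalIntegral.norm_integral_le_of_norm_le_const
    (f := fun s => φ x - φ s) (C := ∫ u in a..b, |φ' u|) fun s hs =>
      abs_sub_le_integral_abs_deriv hφ hφ' hx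
        ((Set.uIcc_of_le hab.le).subset (Set.uIoc_subset_uIcc hs))
  rw [Real.norm_eq_abs, abs_of_pos hba] at hbound
  rwa [hmean, abs_div, abs_of_pos hba, div_le_iff₀ hba]

theorem sq_integral_abs_le (hab : a ≤ b) (hφ : Continuous φ) :
    (∫ t in a..b, |φ t|) ^ 2 ≤ (b - a) * ∫ t in a..b, φ t ^ 2 := by
  set I := ∫ t in a..b, |φ t| with hI
  have habs : IntervalIntegrable (fun t => |φ t|) volume a b := hφ.abs.intervalIntegrable _ _
  have hsq : IntervalIntegrable (fun t => φ t ^ 2) volume a b := (hφ.pow 2).intervalIntegrable _ _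
  -- Cauchy–Schwarz, from the nonnegative variance of `(b - a) |φ|` about `I`
  have hvar : 0 ≤ ∫ t in a..b, ((b - a) * |φ t| - I) ^ 2 :=
    intervalIntegral.integral_nonneg hab fun t _ => sq_nonneg _
  have hexpand : ∫ t in a..b, ((b - a) * |φ t| - I) ^ 2
      = (b - a) * ((b - a) * (∫ t in a..b, φ t ^ 2) - I ^ 2) := by
    have hpt : ∀ t, ((b - a) * |φ t| - I) ^ 2
        = (b - a) ^ 2 * φ t ^ 2 - 2 * (b - a) * I * |φ t| + I ^ 2 := fun t => by
      rw [← sq_abs (φ t)]; ring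
    simp_rw [hpt]
    rw [intervalIntegral.integral_add ((hsq.const_mul _).sub (habs.const_mul _))
        intervalIntegrable_const, intervalIntegral.integral_sub (hsq.const_mul _)
        (habs.const_mul _), intervalIntegral.integral_const_mul,
      intervalIntegral.integral_const_mul, intervalIntegral.integral_const, smul_eq_mul, ← hI]
    ring
  rcases hab.eq_or_lt with rfl | hlt
  · simp [I]
  · rw [hexpand, mul_nonneg_iff_of_pos_left (sub_pos.mpr hlt)] at hvar
    linarith

theorem sq_le_average_add_integral (hab : a < b) (hφ : ∀ u, HasDerivAt φ (φ' u) u)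
    (hφ' : Continuous φ') (hx : x ∈ Set.Icc a b) :
    φ x ^ 2 ≤ (∫ s in a..b, φ s ^ 2) / (b - a) + ∫ u in a..b, (φ u ^ 2 + φ' u ^ 2) := by
  have hcont : Continuous φ := continuous_iff_continuousAt.mpr fun u => (hφ u).continuousAt
  have hd : ∀ u, HasDerivAt (fun s => φ s ^ 2) (2 * φ u * φ' u) u := fun u => by
    simpa [mul_comm, mul_assoc, mul_left_comm] using (hφ u).fun_pow 2
  have h := abs_le.mp (abs_sub_average_le hab hd (by fun_prop) hx)
  have hamgm : ∫ u in a..b, |2 * φ u * φ' u| ≤ ∫ u in a..b, (φ u ^ 2 + φ' u ^ 2) :=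
    intervalIntegral.integral_mono_on hab.le (Continuous.intervalIntegrable (by fun_prop) _ _)
      (Continuous.intervalIntegrable (by fun_prop) _ _) fun u _ => by
      rw [abs_mul, abs_mul, abs_two]
      nlinarith [sq_nonneg (|φ u| - |φ' u|), sq_abs (φ u), sq_abs (φ' u)]
  linarith [h.2]

end OneDimensional

section Cell

variable {F : Pt → ℝ}

theorem integrableOn_cell (hF : Continuous F) : IntegrableOn F cell :=
  (hF.continuousOn.integrableOn_compact (isCompact_Icc.prod isCompact_Icc)).mono_set
    (Set.prod_mono Set.Ioo_subset_Icc_self Set.Ioo_subset_Icc_self)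

theorem intervalIntegral_eq_integral_Ioo {a b : ℝ} (hab : a ≤ b) (g : ℝ → ℝ) :
    ∫ t in a..b, g t = ∫ t in Set.Ioo a b, g t := by
  rw [intervalIntegral.integral_of_le hab, integral_Ioc_eq_integral_Ioo]

theorem integral_cell_eq_iterated (hF : Continuous F) :
    ∫ y in cell, F y = ∫ t in (-1:ℝ)..1, ∫ s in (-1:ℝ)..1, F (s, t) := by
  simp_rw [intervalIntegral_eq_integral_Ioo (show (-1:ℝ) ≤ 1 by norm_num)]
  have hswap := setIntegral_prod_swap (μ := volume) (ν := volume)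
    (Set.Ioo (-1:ℝ) 1) (Set.Ioo (-1:ℝ) 1) (fun p : Pt => F p.swap)
  simp only [Prod.swap_swap] at hswap
  rw [cell, Measure.volume_eq_prod, hswap, setIntegral_prod]
  · rfl
  · rw [← Measure.volume_eq_prod]
    exact integrableOn_cell (hF.comp continuous_swap)

theorem intervalIntegrable_integral_slice (hF : Continuous F) :
    IntervalIntegrable (fun t => ∫ s in (-1:ℝ)..1, F (s, t)) volume (-1) 1 := by
  simp_rw [intervalIntegral_eq_integral_Ioo (show (-1:ℝ) ≤ 1 by norm_num)]
  rw [intervalIntegrable_iff_integrableOn_Ioo_of_le (by norm_num)]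
  have hInt : Integrable (fun p : Pt => F (p.2, p.1))
      ((volume.restrict (Set.Ioo (-1:ℝ) 1)).prod (volume.restrict (Set.Ioo (-1:ℝ) 1))) := by
    rw [Measure.prod_restrict, ← Measure.volume_eq_prod]
    exact integrableOn_cell (hF.comp continuous_swap)
  exact hInt.integral_prod_left

end Cell

section Estimates

variable {f h : Pt → ℝ}

theorem integral_sq_slice_le (hh : ContDiff ℝ 1 h) {x : ℝ} (hx : x ∈ Set.Icc (-1:ℝ) 1) :
    ∫ t in (-1:ℝ)..1, h (x, t) ^ 2 ≤ 3 / 2 * L2sq h + L2sq (p1 h) := by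
  have hc : Continuous h := hh.continuous
  have hc1 : Continuous (p1 h) := (contDiff_p1 (m := 0) hh (by norm_num)).continuous
  have hslice : ∀ t, h (x, t) ^ 2 ≤ (∫ s in (-1:ℝ)..1, h (s, t) ^ 2) / 2
      + ∫ s in (-1:ℝ)..1, (h (s, t) ^ 2 + p1 h (s, t) ^ 2) := fun t => by
    have := sq_le_average_add_integral (by norm_num)
      (hasDerivAt_p1 (hh.differentiable one_ne_zero) · t) (by fun_prop) hx
    norm_num at this ⊢
    exact this
  have hI₁ := (intervalIntegrable_integral_slice (F := fun p => h p ^ 2) (by fun_prop)).div_const 2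
  have hI₂ := intervalIntegrable_integral_slice (F := fun p => h p ^ 2 + p1 h p ^ 2) (by fun_prop)
  calc ∫ t in (-1:ℝ)..1, h (x, t) ^ 2
      ≤ ∫ t in (-1:ℝ)..1, ((∫ s in (-1:ℝ)..1, h (s, t) ^ 2) / 2
          + ∫ s in (-1:ℝ)..1, (h (s, t) ^ 2 + p1 h (s, t) ^ 2)) :=
        intervalIntegral.integral_mono_on (by norm_num)
          (Continuous.intervalIntegrable (by fun_prop) _ _) (hI₁.add hI₂) fun t _ => hslice t
    _ = L2sq h / 2 + (L2sq h + L2sq (p1 h)) := by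
        rw [intervalIntegral.integral_add hI₁ hI₂, intervalIntegral.integral_div,
          ← integral_cell_eq_iterated (F := fun p => h p ^ 2) (by fun_prop),
          ← integral_cell_eq_iterated (F := fun p => h p ^ 2 + p1 h p ^ 2) (by fun_prop),
          integral_add (integrableOn_cell (by fun_prop)) (integrableOn_cell (by fun_prop))]
        rfl
    _ = 3 / 2 * L2sq h + L2sq (p1 h) := by ring

theorem abs_le_of_intervalIntegral_eq_zero (hf : ContDiff ℝ 2 f)
    (hmean : ∀ x, ∫ t in (-1:ℝ)..1, f (x, t) = 0) {y : Pt} (hy : y ∈ cell) :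
    |f y| ≤ 2 * Real.sqrt (L2sq (p2 f) + L2sq (p1 (p2 f))) := by
  obtain ⟨x, τ⟩ := y
  obtain ⟨hx, hτ⟩ := hy
  have hp2 : ContDiff ℝ 1 (p2 f) := contDiff_p2 hf (by norm_num)
  have hslice : |f (x, τ)| ≤ ∫ t in (-1:ℝ)..1, |p2 f (x, t)| := by
    have := abs_sub_average_le (by norm_num)
      (hasDerivAt_p2 (hf.differentiable two_ne_zero) x) (by fun_prop) (Set.mem_Icc_of_Ioo hτ)
    rwa [hmean x, zero_div, sub_zero] at this
  have hsq : f (x, τ) ^ 2 ≤ 2 ^ 2 * (L2sq (p2 f) + L2sq (p1 (p2 f))) := calc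
    f (x, τ) ^ 2 ≤ (∫ t in (-1:ℝ)..1, |p2 f (x, t)|) ^ 2 := by
        rw [← sq_abs]; exact pow_le_pow_left₀ (abs_nonneg _) hslice 2
    _ ≤ 2 * ∫ t in (-1:ℝ)..1, p2 f (x, t) ^ 2 := by
        have := sq_integral_abs_le (a := -1) (b := 1) (φ := fun t => p2 f (x, t))
          (by norm_num) (by fun_prop)
        norm_num at this ⊢; exact this
    _ ≤ 2 * (3 / 2 * L2sq (p2 f) + L2sq (p1 (p2 f))) := by
        gcongr; exact integral_sq_slice_le hp2 (Set.mem_Icc_of_Ioo hx)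
    _ ≤ 2 ^ 2 * (L2sq (p2 f) + L2sq (p1 (p2 f))) := by
        nlinarith [L2sq_nonneg (p2 f), L2sq_nonneg (p1 (p2 f))]
  calc |f (x, τ)| ≤ Real.sqrt (2 ^ 2 * (L2sq (p2 f) + L2sq (p1 (p2 f)))) := Real.abs_le_sqrt hsq
    _ = 2 * Real.sqrt (L2sq (p2 f) + L2sq (p1 (p2 f))) := by
        rw [Real.sqrt_mul (by norm_num), Real.sqrt_sq (by norm_num)]

end Estimates

section SobolevNorms

theorem sobSq_one (f : Pt → ℝ) : sobSq 1 f = L2sq f + L2sq (p2 f) + L2sq (p1 f) := by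
  simp [sobSq, pd, Finset.sum_range_succ]

theorem sobSq_two (f : Pt → ℝ) :
    sobSq 2 f = L2sq f + L2sq (p2 f) + L2sq (p2 (p2 f))
      + L2sq (p1 f) + L2sq (p1 (p2 f)) + L2sq (p1 (p1 f)) := by
  simp [sobSq, pd, Finset.sum_range_succ]
  ring

theorem sobSq_nonneg (i : ℕ) (f : Pt → ℝ) : 0 ≤ sobSq i f :=
  Finset.sum_nonneg fun _ _ => Finset.sum_nonneg fun _ _ => L2sq_nonneg _

theorem sqrt_L2sq_add_L2sq_p1_le_sob_one (f : Pt → ℝ) :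
    Real.sqrt (L2sq f + L2sq (p1 f)) ≤ sob 1 f := by
  rw [sob, sobSq_one]
  gcongr
  linarith [L2sq_nonneg (p2 f)]

theorem sqrt_L2sq_p1_add_L2sq_p1_p1_le_sob_two (f : Pt → ℝ) :
    Real.sqrt (L2sq (p1 f) + L2sq (p1 (p1 f))) ≤ sob 2 f := by
  rw [sob, sobSq_two]
  gcongr
  linarith [L2sq_nonneg f, L2sq_nonneg (p2 f), L2sq_nonneg (p2 (p2 f)), L2sq_nonneg (p1 (p2 f))]

theorem sob_comp1_le_sobV (i : ℕ) (v : Pt → Pt) : sob i (comp1 v) ≤ sobV i v :=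
  Real.sqrt_le_sqrt (le_add_of_nonneg_right (sobSq_nonneg i _))

theorem sob_comp2_le_sobV (i : ℕ) (v : Pt → Pt) : sob i (comp2 v) ≤ sobV i v :=
  Real.sqrt_le_sqrt (le_add_of_nonneg_left (sobSq_nonneg i _))

theorem sobV_one_d2V_le (v : Pt → Pt) : sobV 1 (d2V v) ≤ sobV 2 v := by
  have hle (g : Pt → ℝ) : sobSq 1 (p2 g) ≤ sobSq 2 g := by
    rw [sobSq_one, sobSq_two]
    linarith [L2sq_nonneg g, L2sq_nonneg (p1 g), L2sq_nonneg (p1 (p1 g))]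
  exact Real.sqrt_le_sqrt (add_le_add (hle (comp1 v)) (hle (comp2 v)))

end SobolevNorms

section Components

variable {f : Pt → ℝ} {y : Pt}

theorem abs_p2_le_of_periodic (hf : ContDiff ℝ 3 f) (hper : ∀ y : Pt, f (y.1, y.2 + 2) = f y)
    (hy : y ∈ cell) : |p2 f y| ≤ 2 * sob 1 (p2 (p2 f)) :=
  (abs_le_of_intervalIntegral_eq_zero (contDiff_p2 hf (by norm_num))
    (intervalIntegral_p2_eq_zero (hf.of_le (by norm_num)) hper) hy).trans <| by
      gcongr; exact sqrt_L2sq_add_L2sq_p1_le_sob_one _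

theorem abs_p1_le_of_odd (hf : ContDiff ℝ 3 f) (hodd : ∀ y : Pt, f (y.1, -y.2) = -f y)
    (hy : y ∈ cell) : |p1 f y| ≤ 2 * sob 2 (p2 f) := by
  have hmean (x : ℝ) : ∫ t in (-1:ℝ)..1, p1 f (x, t) = 0 :=
    intervalIntegral_eq_zero_of_odd
      fun t => p1_of_odd (hf.differentiable (by norm_num)) hodd (x, t)
  have h := abs_le_of_intervalIntegral_eq_zero (contDiff_p1 hf (by norm_num)) hmean hy
  rw [← p1_p2_comm (hf.of_le (by norm_num))] at h
  exact h.trans (by gcongr; exact sqrt_L2sq_p1_add_L2sq_p1_p1_le_sob_two _)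

end Components

theorem abs_le_of_det_eq_one {A B C D : ℝ} (hdet : (1 + A) * (1 + D) - B * C = 1)
    (hD : |D| ≤ 1 / 2) : |A| ≤ 2 * (|D| + |B| * |C|) := by
  have hA : A * (1 + D) = B * C - D := by linarith
  have hAD : |A| * |1 + D| ≤ |B| * |C| + |D| := by
    rw [← abs_mul, hA, ← abs_mul]
    exact abs_sub _ _
  have h1D : 1 / 2 ≤ |1 + D| := by
    obtain ⟨hD', -⟩ := abs_le.mp hD
    rw [abs_of_pos (by linarith)]
    linarith
  nlinarith [abs_nonneg A]

/-- there are constants `δ ∈ (0,1]`, `c₀ > 0` such that for every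
smooth 2-periodic map `η` satisfying the odevity conditions, `det(I + ∇η) = 1` and
`‖∂₂η‖₂ ≤ δ`, one has `‖∂₁η_j‖_{L^∞} ≤ c₀‖∂₂η‖₂` and `‖∂₂η_j‖_{L^∞} ≤ c₀‖∂₂²η‖₁`
for `j = 1, 2`, the `L^∞` norms being taken over the periodic cell. -/
theorem statement10 :
    ∃ δ c₀ : ℝ, 0 < δ ∧ δ ≤ 1 ∧ 0 < c₀ ∧
      ∀ η : Pt → Pt, ContDiff ℝ (⊤ : ℕ∞) η →
        Periodic2 (comp1 η) → Periodic2 (comp2 η) → Odev η → DetCond η →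
        sobV 2 (d2V η) ≤ δ →
        ∀ y ∈ cell,
          |p1 (comp1 η) y| ≤ c₀ * sobV 2 (d2V η) ∧
          |p1 (comp2 η) y| ≤ c₀ * sobV 2 (d2V η) ∧
          |p2 (comp1 η) y| ≤ c₀ * sobV 1 (d2V (d2V η)) ∧
          |p2 (comp2 η) y| ≤ c₀ * sobV 1 (d2V (d2V η)) := by
  refine ⟨1 / 4, 6, by norm_num, by norm_num, by norm_num, ?_⟩
  intro η hη hper₁ hper₂ hodev hdet hsmall y hy
  have hsmooth : (3 : WithTop ℕ∞) ≤ (⊤ : ℕ∞) := WithTop.coe_le_coe.mpr le_top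
  have hη₁ : ContDiff ℝ 3 (comp1 η) := (contDiff_fst.comp hη).of_le hsmooth
  have hη₂ : ContDiff ℝ 3 (comp2 η) := (contDiff_snd.comp hη).of_le hsmooth
  have hB : |p2 (comp1 η) y| ≤ 2 * sobV 1 (d2V (d2V η)) :=
    (abs_p2_le_of_periodic hη₁ hper₁.2 hy).trans
      (by gcongr; exact sob_comp1_le_sobV 1 (d2V (d2V η)))
  have hD : |p2 (comp2 η) y| ≤ 2 * sobV 1 (d2V (d2V η)) :=
    (abs_p2_le_of_periodic hη₂ hper₂.2 hy).trans
      (by gcongr; exact sob_comp2_le_sobV 1 (d2V (d2V η)))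
  have hC : |p1 (comp2 η) y| ≤ 2 * sobV 2 (d2V η) :=
    (abs_p1_le_of_odd hη₂ (fun z => (hodev z).2) hy).trans
      (by gcongr; exact sob_comp2_le_sobV 2 (d2V η))
  have hS : sobV 1 (d2V (d2V η)) ≤ sobV 2 (d2V η) := sobV_one_d2V_le (d2V η)
  have hS₁ : 0 ≤ sobV 1 (d2V (d2V η)) := Real.sqrt_nonneg _
  have hBC : |p2 (comp1 η) y| * |p1 (comp2 η) y| ≤ sobV 2 (d2V η) := by
    nlinarith [mul_le_mul hB hC (abs_nonneg _) (by positivity)]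
  have hA := abs_le_of_det_eq_one (hdet y) (by linarith)
  exact ⟨by linarith, by linarith, by linarith, by linarith⟩
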